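/- arXiv:1002.3128 — 3 statements merged into one kernel-verified Lean document; each statement's English description precedes it below -/
import Mathlib

section
/- Let X be an n×p matrix with columns x_j, let F̄ ⊆ {1,…,p} be such that X_F̄ has full column rank, and define μ_X(F̄) = max_{j∉F̄} ‖(X_F̄^T X_F̄)^{-1} X_F̄^T x_j‖₁. If r = X_F̄ u for some vector u (i.e., r lies in the column span of X_F̄), then max_{j∉F̄} |x_j^T r| ≤ μ_X(F̄) · max_{i∈F̄} |x_i^T r|. -/
open Finset Matrix

/-! Since `u` lives on `F̄` and the regression vector `c` of `x_j` reproduces the Gram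
products `⟪x_i, x_j⟫` for `i ∈ F̄`, one gets `⟪x_j, r⟫ = ⟪X c, r⟫ = ∑ₜ cₜ ⟪x_t, r⟫` for `r = X u`.
As `c` is also supported in `F̄`, Hölder's inequality `|c ⬝ᵥ y| ≤ ‖c‖₁ · maxᵢ∈F̄ |yᵢ|`
applied to `y = Xᵀ r` finishes the proof. -/

section

variable {ι R : Type*} [Fintype ι]

theorem dotProduct_eq_of_eqOn_of_support_subset [CommSemiring R] (s : Finset ι)
    {u v w : ι → R} (hu : ∀ m ∉ s, u m = 0) (hvw : ∀ m ∈ s, v m = w m) :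
    v ⬝ᵥ u = w ⬝ᵥ u := by
  refine Finset.sum_congr rfl fun m _ => ?_
  by_cases hm : m ∈ s
  · rw [hvw m hm]
  · simp only [hu m hm, mul_zero]

theorem abs_dotProduct_le_sum_abs_mul_sup' [CommRing R] [LinearOrder R] [IsStrictOrderedRing R]
    (s : Finset ι) (hs : s.Nonempty) {c : ι → R} (hc : ∀ m ∉ s, c m = 0) (y : ι → R) :
    |c ⬝ᵥ y| ≤ (∑ m, |c m|) * s.sup' hs (fun i => |y i|) :=
  calc |c ⬝ᵥ y| ≤ ∑ m, |c m * y m| := Finset.abs_sum_le_sum_abs _ _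
    _ ≤ ∑ m, |c m| * s.sup' hs (fun i => |y i|) := by
        refine Finset.sum_le_sum fun m _ => ?_
        rw [abs_mul]
        by_cases hm : m ∈ s
        · exact mul_le_mul_of_nonneg_left (s.le_sup' (fun i => |y i|) hm) (abs_nonneg _)
        · simp only [hc m hm, abs_zero, zero_mul, le_refl]
    _ = (∑ m, |c m|) * s.sup' hs (fun i => |y i|) := (Finset.sum_mul _ _ _).symm

end

section

variable {m n R : Type*} [Fintype m] [Fintype n] [CommSemiring R]

theorem transpose_mulVec_mulVec_apply_eq_dotProduct (X : Matrix m n R) (s : Finset n)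
    {u c : n → R} (hu : ∀ k ∉ s, u k = 0) (j : n)
    (hc : ∀ i ∈ s, (Xᵀ *ᵥ fun k => X k j) i = (Xᵀ *ᵥ X *ᵥ c) i) :
    (Xᵀ *ᵥ X *ᵥ u) j = c ⬝ᵥ (Xᵀ *ᵥ X *ᵥ u) :=
  calc (Xᵀ *ᵥ X *ᵥ u) j = (fun k => X k j) ⬝ᵥ X *ᵥ u := rfl
    _ = (Xᵀ *ᵥ fun k => X k j) ⬝ᵥ u := by rw [dotProduct_mulVec, mulVec_transpose]
    _ = (Xᵀ *ᵥ X *ᵥ c) ⬝ᵥ u := dotProduct_eq_of_eqOn_of_support_subset s hu hc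
    _ = X *ᵥ u ⬝ᵥ X *ᵥ c := by rw [mulVec_transpose, ← dotProduct_mulVec, dotProduct_comm]
    _ = c ⬝ᵥ (Xᵀ *ᵥ X *ᵥ u) := by rw [dotProduct_mulVec, ← mulVec_transpose, dotProduct_comm]

end

/-- Mutual incoherence lemma. Suppose for each `j ∉ F̄` the regression
coefficient vector `c` of `x_j` on the columns `X_F̄` (i.e. `c` supported in `F̄`
with `X_F̄ᵀ x_j = X_F̄ᵀ X c`, which equals `(X_F̄ᵀX_F̄)⁻¹X_F̄ᵀ x_j` when `X_F̄` has
full column rank) has `ℓ₁`-norm at most `μ`. If the residual `r = X u` lies in the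
column span of `X_F̄` (`u` supported in `F̄`), then
`max_{j∉F̄} |x_jᵀ r| ≤ μ · max_{i∈F̄} |x_iᵀ r|`. -/
theorem mutual_incoherence_correlation_bound
    {n p : ℕ} (X : Matrix (Fin n) (Fin p) ℝ)
    (Fbar : Finset (Fin p)) (hne : Fbar.Nonempty) (μ : ℝ)
    (hc : ∀ j ∉ Fbar, ∃ c : Fin p → ℝ,
      (∀ m ∉ Fbar, c m = 0) ∧ (∑ m, |c m|) ≤ μ ∧
      ∀ i ∈ Fbar, (∑ k, X k i * X k j) = ∑ k, X k i * X.mulVec c k)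
    (r : Fin n → ℝ) (u : Fin p → ℝ)
    (hu : ∀ j ∉ Fbar, u j = 0) (hr : r = X.mulVec u) :
    ∀ j ∉ Fbar,
      |∑ i, X i j * r i| ≤ μ * Fbar.sup' hne (fun i => |∑ k, X k i * r k|) := by
  intro j hj
  obtain ⟨c, hc_supp, hc_norm, hc_gram⟩ := hc j hj
  subst hr
  change |(Xᵀ *ᵥ X *ᵥ u) j| ≤ μ * Fbar.sup' hne (fun i => |(Xᵀ *ᵥ X *ᵥ u) i|)
  obtain ⟨i₀, hi₀⟩ := hne
  have hsup_nonneg : 0 ≤ Fbar.sup' ⟨i₀, hi₀⟩ (fun i => |(Xᵀ *ᵥ X *ᵥ u) i|) :=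
    (abs_nonneg _).trans (Fbar.le_sup' (fun i => |(Xᵀ *ᵥ X *ᵥ u) i|) hi₀)
  rw [transpose_mulVec_mulVec_apply_eq_dotProduct X Fbar hu j hc_gram]
  exact (abs_dotProduct_le_sum_abs_mul_sup' Fbar _ hc_supp _).trans
    (mul_le_mul_of_nonneg_right hc_norm hsup_nonneg)
end

section
/- Under the conditions of the previous lemma, if additionally μ_X(F̄) < 1 and r = X_F̄ u ≠ 0 with some i ∈ F̄ satisfying x_i^T r ≠ 0, then the unweighted forward stepwise selection argmax_j |x_j^T r| is attained at an index in F̄. -/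
/-!
For `j ∉ F̄`, the incoherence certificate `c` makes `x_j` and `X c` indistinguishable against the
columns in `F̄`, and `r = X u` is a combination of those columns; hence `x_jᵀ r = (X c)ᵀ r =
∑ m, c m * x_mᵀ r`. So `|x_jᵀ r| ≤ ‖c‖₁ · max_{i ∈ F̄} |x_iᵀ r| ≤ μ · max`, and this is strictly
below the maximum because `μ < 1` and the maximum is positive.
-/

open Finset Matrix

section Correlation

variable {ι κ R : Type*} [Fintype ι] [Fintype κ]

theorem sum_mul_mulVec_eq_sum_mul_sum [CommSemiring R] (X : Matrix ι κ R) (v : ι → R)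
    (w : κ → R) : ∑ k, v k * (X *ᵥ w) k = ∑ l, w l * ∑ k, X k l * v k := by
  simp only [mulVec, dotProduct, mul_sum]
  rw [sum_comm]
  exact sum_congr rfl fun _ _ => sum_congr rfl fun _ _ => by ring

theorem sum_mul_mulVec_eq_of_gram_eq [CommSemiring R] (X : Matrix ι κ R) (s : Finset κ)
    (u c : κ → R) (j : κ) (hu : ∀ l ∉ s, u l = 0)
    (hc : ∀ i ∈ s, ∑ k, X k i * X k j = ∑ k, X k i * (X *ᵥ c) k) :
    ∑ k, X k j * (X *ᵥ u) k = ∑ m, c m * ∑ k, X k m * (X *ᵥ u) k := by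
  have hgram : ∀ l, u l * ∑ k, X k l * X k j = u l * ∑ k, X k l * (X *ᵥ c) k := by
    intro l
    by_cases hl : l ∈ s
    · rw [hc l hl]
    · rw [hu l hl, zero_mul, zero_mul]
  calc ∑ k, X k j * (X *ᵥ u) k = ∑ l, u l * ∑ k, X k l * (X *ᵥ c) k := by
        rw [sum_mul_mulVec_eq_sum_mul_sum]; exact sum_congr rfl fun l _ => hgram l
    _ = ∑ k, (X *ᵥ c) k * (X *ᵥ u) k := (sum_mul_mulVec_eq_sum_mul_sum X _ u).symm
    _ = ∑ m, c m * ∑ k, X k m * (X *ᵥ u) k := by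
        simp_rw [mul_comm ((X *ᵥ c) _)]; exact sum_mul_mulVec_eq_sum_mul_sum X _ c

end Correlation

theorem abs_sum_mul_le_sum_abs_mul_sup' {κ R : Type*} [Fintype κ] [Ring R] [LinearOrder R]
    [IsOrderedRing R] (s : Finset κ) (hs : s.Nonempty) (c g : κ → R)
    (hc : ∀ m ∉ s, c m = 0) :
    |∑ m, c m * g m| ≤ (∑ m, |c m|) * s.sup' hs (fun i => |g i|) := by
  rw [sum_mul]
  refine (abs_sum_le_sum_abs _ _).trans (sum_le_sum fun m _ => ?_)
  rw [abs_mul]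
  by_cases hm : m ∈ s
  · exact mul_le_mul_of_nonneg_left (le_sup' (fun i => |g i|) hm) (abs_nonneg _)
  · rw [hc m hm, abs_zero, zero_mul, zero_mul]

/-- Under the mutual incoherence condition with `μ_X(F̄) < 1`, if the
residual `r = X u` lies in the span of the signal columns and some signal column has
nonzero correlation with `r`, then the unweighted forward stepwise criterion
`argmax_j |x_jᵀ r|` is attained at an index in `F̄`: every noise correlation is
strictly smaller than the maximal signal correlation. -/
theorem stepwise_selects_signal_under_incoherence
    {n p : ℕ} (X : Matrix (Fin n) (Fin p) ℝ)
    (Fbar : Finset (Fin p)) (hne : Fbar.Nonempty) (μ : ℝ) (hμ : μ < 1)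
    (hc : ∀ j ∉ Fbar, ∃ c : Fin p → ℝ,
      (∀ m ∉ Fbar, c m = 0) ∧ (∑ m, |c m|) ≤ μ ∧
      ∀ i ∈ Fbar, (∑ k, X k i * X k j) = ∑ k, X k i * X.mulVec c k)
    (r : Fin n → ℝ) (u : Fin p → ℝ)
    (hu : ∀ j ∉ Fbar, u j = 0) (hr : r = X.mulVec u)
    (hnz : ∃ i ∈ Fbar, (∑ k, X k i * r k) ≠ 0) :
    ∀ j ∉ Fbar,
      |∑ i, X i j * r i| < Fbar.sup' hne (fun i => |∑ k, X k i * r k|) := by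
  intro j hj
  obtain ⟨c, hc_supp, hc_norm, hc_gram⟩ := hc j hj
  have hmax_pos : 0 < Fbar.sup' hne (fun i => |∑ k, X k i * r k|) := by
    obtain ⟨i, hi, hi_ne⟩ := hnz
    exact (abs_pos.2 hi_ne).trans_le (le_sup' (fun i => |∑ k, X k i * r k|) hi)
  subst hr
  calc |∑ i, X i j * (X *ᵥ u) i|
      = |∑ m, c m * ∑ k, X k m * (X *ᵥ u) k| := by
        rw [sum_mul_mulVec_eq_of_gram_eq X Fbar u c j hu hc_gram]
    _ ≤ (∑ m, |c m|) * Fbar.sup' hne (fun i => |∑ k, X k i * (X *ᵥ u) k|) :=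
        abs_sum_mul_le_sum_abs_mul_sup' Fbar hne c _ hc_supp
    _ ≤ μ * Fbar.sup' hne (fun i => |∑ k, X k i * (X *ᵥ u) k|) := by gcongr
    _ < Fbar.sup' hne (fun i => |∑ k, X k i * (X *ᵥ u) k|) := mul_lt_of_lt_one_left hmax_pos hμ
end

section
/- Let X be an n×p matrix with (1/n)‖x_j‖₂² = 1 for all j, F̄ ⊆ {1,…,p} with ρ_X(F̄) > 0, and β, β' two vectors supported in F̄ with β' the least-squares minimizer over support F̄ for response y. If max_{i∈F̄}|x_i^T(Xβ − y)| ≤ ε, then ‖β − β'‖₂ ≤ ε √|F̄| / (n ρ_X(F̄)) · √n = ε ρ_X(F̄)^{-1} √(|F̄|/n). -/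
/-!
Minimality of `β'` among vectors supported in `F̄` gives the normal equations
`x_jᵀ(Xβ' - y) = 0` for `j ∈ F̄`, so `δ = β - β'` satisfies `|x_jᵀ X δ| ≤ ε` on `F̄`.
Since `δ` is supported in `F̄`, `‖Xδ‖² = Σ_{j ∈ F̄} δ_j x_jᵀ X δ ≤ ε ‖δ‖₁ ≤ ε √|F̄| ‖δ‖₂`,
while the restricted eigenvalue bound gives `n ρ ‖δ‖₂² ≤ ‖Xδ‖²`. Dividing by `‖δ‖₂`,
`‖δ‖₂ ≤ ε √|F̄| / (n ρ) ≤ ε ρ⁻¹ √(|F̄| / n)`.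
-/

open Finset Matrix

section
variable {ι : Type*}

theorem mul_sqrt_card_nonneg_of_abs_le {F : Finset ι} {g : ι → ℝ} {ε : ℝ}
    (hg : ∀ j ∈ F, |g j| ≤ ε) : 0 ≤ ε * √(#F : ℝ) := by
  rcases F.eq_empty_or_nonempty with rfl | ⟨j, hj⟩
  · simp
  · exact mul_nonneg ((abs_nonneg _).trans (hg j hj)) (Real.sqrt_nonneg _)

variable {m : Type*} [Fintype m] [Fintype ι]

theorem transpose_mulVec_residual_eq_zero {X : Matrix m ι ℝ} {y : m → ℝ} {F : Finset ι}
    {β' : ι → ℝ} (hβ' : ∀ j ∉ F, β' j = 0)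
    (hmin : ∀ v : ι → ℝ, (∀ j ∉ F, v j = 0) →
      ∑ i, ((X *ᵥ β') i - y i) ^ 2 ≤ ∑ i, ((X *ᵥ v) i - y i) ^ 2)
    {j : ι} (hj : j ∈ F) :
    (Xᵀ *ᵥ (X *ᵥ β' - y)) j = 0 := by
  classical
  set b := (Xᵀ *ᵥ (X *ᵥ β' - y)) j
  have hquad : ∀ t : ℝ, 0 ≤ (∑ i, X i j ^ 2) * (t * t) + 2 * b * t + 0 := fun t => by
    have hsupp : ∀ k ∉ F, (β' + Pi.single j t : ι → ℝ) k = 0 := fun k hk => by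
      simp [hβ' k hk, (ne_of_mem_of_not_mem hj hk).symm]
    have h := hmin _ hsupp
    simp only [mulVec_add, mulVec_single] at h
    have hexpand : ∑ i, ((X *ᵥ β' + MulOpposite.op t • X.col j) i - y i) ^ 2
        = ∑ i, ((X *ᵥ β') i - y i) ^ 2 + ((∑ i, X i j ^ 2) * (t * t) + 2 * b * t) := by
      simp only [b, mulVec, dotProduct, transpose_apply, Pi.sub_apply, Pi.add_apply,
        Pi.smul_apply, col_apply, op_smul_eq_mul, ← sum_add_distrib, sum_mul, mul_sum]
      exact sum_congr rfl fun i _ => by ring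
    linarith
  have hdiscrim := discrim_le_zero hquad
  rw [discrim] at hdiscrim
  nlinarith [sq_nonneg b]

theorem sum_sq_mulVec_eq_dotProduct (X : Matrix m ι ℝ) (v : ι → ℝ) :
    ∑ i, (X *ᵥ v) i ^ 2 = v ⬝ᵥ (Xᵀ *ᵥ (X *ᵥ v)) := by
  rw [mulVec_transpose, dotProduct_comm, ← dotProduct_mulVec]
  simp only [dotProduct, sq]

theorem dotProduct_le_of_abs_le_of_support_subset {F : Finset ι} {v g : ι → ℝ} {ε : ℝ}
    (hv : ∀ j ∉ F, v j = 0) (hg : ∀ j ∈ F, |g j| ≤ ε) :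
    v ⬝ᵥ g ≤ ε * √(#F : ℝ) * √(∑ j, v j ^ 2) := by
  rcases F.eq_empty_or_nonempty with rfl | ⟨j₀, hj₀⟩
  · simp [show v = 0 from funext fun j => hv j (notMem_empty j)]
  have hε : 0 ≤ ε := (abs_nonneg _).trans (hg j₀ hj₀)
  have hsum_sq : ∑ j ∈ F, v j ^ 2 = ∑ j, v j ^ 2 :=
    sum_subset (subset_univ F) fun j _ hj => by simp [hv j hj]
  calc v ⬝ᵥ g = ∑ j ∈ F, v j * g j :=
        (sum_subset (subset_univ F) fun j _ hj => by simp [hv j hj]).symm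
    _ ≤ ∑ j ∈ F, |v j| * ε := sum_le_sum fun j hj => (le_abs_self _).trans <| by
        rw [abs_mul]; exact mul_le_mul_of_nonneg_left (hg j hj) (abs_nonneg _)
    _ = ε * ∑ j ∈ F, |v j| * 1 := by rw [mul_sum]; simp [mul_comm]
    _ ≤ ε * (√(∑ j ∈ F, |v j| ^ 2) * √(∑ j ∈ F, (1 : ℝ) ^ 2)) := by
        gcongr; exact Real.sum_mul_le_sqrt_mul_sqrt _ _ _
    _ = ε * √(#F : ℝ) * √(∑ j, v j ^ 2) := by
        simp only [sq_abs, hsum_sq, one_pow, sum_const, nsmul_eq_mul, mul_one]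
        ring

theorem le_div_of_mul_sq_le_mul {a c s : ℝ} (ha : 0 < a) (hc : 0 ≤ c) (hs : 0 ≤ s)
    (h : a * s ^ 2 ≤ c * s) : s ≤ c / a := by
  rw [le_div_iff₀ ha]
  rcases hs.eq_or_lt with rfl | hs
  · simpa using hc
  · nlinarith

theorem div_natCast_le_div_sqrt {c : ℝ} (hc : 0 ≤ c) (n : ℕ) : c / n ≤ c / √(n : ℝ) := by
  rcases Nat.eq_zero_or_pos n with rfl | hn
  · simp
  · exact div_le_div_of_nonneg_left hc (by positivity)
      (Real.sqrt_le_self_iff.mpr (Or.inr (by exact_mod_cast hn)))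

theorem sqrt_sum_sq_le_of_restricted_eigenvalue {X : Matrix m ι ℝ} {F : Finset ι} {δ : ι → ℝ}
    {ρ κ ε : ℝ} (hρ : 0 < ρ) (hκ : 0 ≤ κ)
    (hre : ρ * ∑ j, δ j ^ 2 ≤ κ * ∑ i, (X *ᵥ δ) i ^ 2) (hδ : ∀ j ∉ F, δ j = 0)
    (hcorr : ∀ j ∈ F, |(Xᵀ *ᵥ (X *ᵥ δ)) j| ≤ ε) :
    √(∑ j, δ j ^ 2) ≤ κ * (ε * √(#F : ℝ)) / ρ := by
  refine le_div_of_mul_sq_le_mul hρ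
    (mul_nonneg hκ (mul_sqrt_card_nonneg_of_abs_le hcorr)) (Real.sqrt_nonneg _) ?_
  calc ρ * √(∑ j, δ j ^ 2) ^ 2 = ρ * ∑ j, δ j ^ 2 := by
        rw [Real.sq_sqrt (sum_nonneg fun j _ => sq_nonneg _)]
    _ ≤ κ * (δ ⬝ᵥ (Xᵀ *ᵥ (X *ᵥ δ))) := by rwa [← sum_sq_mulVec_eq_dotProduct]
    _ ≤ κ * (ε * √(#F : ℝ)) * √(∑ j, δ j ^ 2) := by
        rw [mul_assoc]
        exact mul_le_mul_of_nonneg_left (dotProduct_le_of_abs_le_of_support_subset hδ hcorr) hκ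

end

theorem ls_distance_bound_from_correlation_general
    {n p : ℕ} (X : Matrix (Fin n) (Fin p) ℝ) (y : Fin n → ℝ)
    (Fbar : Finset (Fin p)) (ρ : ℝ) (hρ : 0 < ρ)
    (hre : ∀ v : Fin p → ℝ, (∀ j ∉ Fbar, v j = 0) → v ≠ 0 →
      ρ * ∑ j, (v j) ^ 2 ≤ (1 / (n : ℝ)) * ∑ i, (X.mulVec v i) ^ 2)
    (β β' : Fin p → ℝ)
    (hβ : ∀ j ∉ Fbar, β j = 0) (hβ' : ∀ j ∉ Fbar, β' j = 0)
    (hmin : ∀ v : Fin p → ℝ, (∀ j ∉ Fbar, v j = 0) →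
      ∑ i, (X.mulVec β' i - y i) ^ 2 ≤ ∑ i, (X.mulVec v i - y i) ^ 2)
    (ε : ℝ)
    (hε : ∀ i ∈ Fbar, |∑ k, X k i * (X.mulVec β k - y k)| ≤ ε) :
    Real.sqrt (∑ j, (β j - β' j) ^ 2) ≤
      ε / ρ * Real.sqrt ((Fbar.card : ℝ) / (n : ℝ)) := by
  set δ := β - β'
  have hδ : ∀ j ∉ Fbar, δ j = 0 := fun j hj => by simp [δ, hβ j hj, hβ' j hj]
  have hcorr : ∀ j ∈ Fbar, |(Xᵀ *ᵥ (X *ᵥ δ)) j| ≤ ε := fun j hj => by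
    have hres : X *ᵥ δ = (X *ᵥ β - y) - (X *ᵥ β' - y) := by simp [δ, mulVec_sub]
    rw [hres, mulVec_sub, Pi.sub_apply, transpose_mulVec_residual_eq_zero hβ' hmin hj, sub_zero]
    exact hε j hj
  have hre' : ρ * ∑ j, δ j ^ 2 ≤ 1 / (n : ℝ) * ∑ i, (X *ᵥ δ) i ^ 2 := by
    by_cases hδ0 : δ = 0
    · simp [hδ0]
    · exact hre δ hδ hδ0
  calc √(∑ j, (β j - β' j) ^ 2) ≤ 1 / (n : ℝ) * (ε * √(#Fbar : ℝ)) / ρ :=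
        sqrt_sum_sq_le_of_restricted_eigenvalue hρ (by positivity) hre' hδ hcorr
    _ ≤ ε * √(#Fbar : ℝ) / √(n : ℝ) / ρ := by
        rw [one_div_mul_eq_div]
        exact div_le_div_of_nonneg_right
          (div_natCast_le_div_sqrt (mul_sqrt_card_nonneg_of_abs_le hcorr) n) hρ.le
    _ = ε / ρ * √((#Fbar : ℝ) / n) := by
        rw [Real.sqrt_div' _ (Nat.cast_nonneg n)]
        ring

/-- If `β, β'` are supported in `F̄`, `β'` is the constrained
least-squares minimizer over support `F̄`, the restricted eigenvalue `ρ_X(F̄) = ρ > 0`,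
columns are normalized, and `max_{i∈F̄}|x_iᵀ(Xβ − y)| ≤ ε`, then
`‖β − β'‖₂ ≤ ε ρ⁻¹ √(|F̄|/n)`. -/
theorem ls_distance_bound_from_correlation
    {n p : ℕ} (hn : 0 < n) (X : Matrix (Fin n) (Fin p) ℝ) (y : Fin n → ℝ)
    (hnorm : ∀ j : Fin p, (1 / (n : ℝ)) * ∑ i, (X i j) ^ 2 = 1)
    (Fbar : Finset (Fin p)) (ρ : ℝ) (hρ : 0 < ρ)
    (hre : ∀ v : Fin p → ℝ, (∀ j ∉ Fbar, v j = 0) → v ≠ 0 →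
      ρ * ∑ j, (v j) ^ 2 ≤ (1 / (n : ℝ)) * ∑ i, (X.mulVec v i) ^ 2)
    (β β' : Fin p → ℝ)
    (hβ : ∀ j ∉ Fbar, β j = 0) (hβ' : ∀ j ∉ Fbar, β' j = 0)
    (hmin : ∀ v : Fin p → ℝ, (∀ j ∉ Fbar, v j = 0) →
      ∑ i, (X.mulVec β' i - y i) ^ 2 ≤ ∑ i, (X.mulVec v i - y i) ^ 2)
    (ε : ℝ)
    (hε : ∀ i ∈ Fbar, |∑ k, X k i * (X.mulVec β k - y k)| ≤ ε) :
    Real.sqrt (∑ j, (β j - β' j) ^ 2) ≤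
      ε / ρ * Real.sqrt ((Fbar.card : ℝ) / (n : ℝ)) :=
  ls_distance_bound_from_correlation_general X y Fbar ρ hρ hre β β' hβ hβ' hmin ε hε
end
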